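/- arXiv:math/0411081 — 7 statements merged into one kernel-verified Lean document; each statement's English description precedes it below -/
import Mathlib

section
/- Let R > 0, let f be holomorphic on the disk {z ∈ ℂ : |z| < R} with f(0) = 0 and f′(0) ≠ 0, and let m ∈ ℂ with m ≠ 0. Then there exist ε > 0 with max(1,|m|)·ε < R and δ > 0 such that: f′ has no zero on {|z| ≤ ε}, f has no zero on {0 < |z| ≤ ε}, for every t ∈ ℂ with 0 < |t| < δ there is a unique point g(t) with |g(t)| < ε and f(g(t)) = t, and the series ∑_{n=1}^∞ tⁿ · (1/(2πi)) ∮_{|z|=ε} f(mz)/f(z)^{n+1} dz converges with sum equal to f(m·g(t))/f′(g(t)). -/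
/-!
Near `0`, `f` is injective with nonvanishing derivative, so for small `t` the equation `f z = t`
has a unique solution `g` in the disc `‖z‖ < ε`, and `‖t‖ < ‖f‖` on the circle `‖z‖ = ε`. There
`1 / (f - t) = ∑ tⁿ / fⁿ⁺¹` converges uniformly, so integrating `f (m z) / (f z - t)` term by term
gives `∑ tⁿ Res f (m z) / fⁿ⁺¹`. Writing `f z - t = (z - g) u z` with `u` holomorphic and
`u g = f' g ≠ 0`, Cauchy's formula evaluates the left side to `f (m g) / f' g`. The `n = 0` term is
`f (m 0) / f' 0 = 0`.
-/

open Complex Metric Real Set Filter Topology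

theorem HasStrictDerivAt.exists_mem_nhds_injOn {𝕜 : Type*} [NontriviallyNormedField 𝕜]
    [CompleteSpace 𝕜] {f : 𝕜 → 𝕜} {f' a : 𝕜} (hf : HasStrictDerivAt f f' a) (hf' : f' ≠ 0) :
    ∃ s ∈ 𝓝 a, InjOn f s :=
  ⟨_, hf.eventually_left_inverse hf', fun _ hx _ hy hxy =>
    hx.symm.trans ((congrArg _ hxy).trans hy)⟩

theorem AnalyticAt.eventually_injOn_closedBall {𝕜 : Type*} [NontriviallyNormedField 𝕜]
    [CompleteSpace 𝕜] {f : 𝕜 → 𝕜} {a : 𝕜} (hf : AnalyticAt 𝕜 f a) (hf' : deriv f a ≠ 0) :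
    ∀ᶠ ε in 𝓝 (0 : ℝ), InjOn f (closedBall a ε) ∧ ∀ z ∈ closedBall a ε, deriv f z ≠ 0 := by
  obtain ⟨s, hs, hinj⟩ := hf.hasStrictDerivAt.exists_mem_nhds_injOn hf'
  filter_upwards [eventually_closedBall_subset
    (inter_mem hs (hf.deriv.continuousAt.eventually_ne hf'))] with ε hε
  exact ⟨hinj.mono (hε.trans inter_subset_left), fun z hz => (hε hz).2⟩

theorem hasSum_circleIntegral_of_dominated {E : Type*} [NormedAddCommGroup E] [NormedSpace ℂ E]
    [CompleteSpace E] {c : ℂ} {R : ℝ} {F : ℕ → ℂ → E} {G : ℂ → E} {bound : ℕ → ℝ} (hR : 0 ≤ R)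
    (hF : ∀ n, ContinuousOn (F n) (sphere c R))
    (hbound : ∀ n, ∀ z ∈ sphere c R, ‖F n z‖ ≤ bound n) (hsum : Summable bound)
    (hlim : ∀ z ∈ sphere c R, HasSum (fun n => F n z) (G z)) :
    HasSum (fun n => ∮ z in C(c, R), F n z) (∮ z in C(c, R), G z) := by
  refine intervalIntegral.hasSum_integral_of_dominated_convergence (fun n _ => R * bound n)
    (fun n => ?_) (fun n => ?_) ?_ intervalIntegrable_const ?_
  · exact ((hF n).circleIntegrable hR).out.def'.aestronglyMeasurable
  · refine Eventually.of_forall fun θ _ => ?_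
    rw [norm_smul, deriv_circleMap, norm_mul, norm_circleMap_zero, norm_I, mul_one,
      abs_of_nonneg hR]
    exact mul_le_mul_of_nonneg_left (hbound n _ (circleMap_mem_sphere c hR θ)) hR
  · exact Eventually.of_forall fun _ _ => hsum.mul_left R
  · exact Eventually.of_forall fun θ _ => (hlim _ (circleMap_mem_sphere c hR θ)).const_smul _

theorem hasSum_pow_mul_circleIntegral_div_pow_succ {c t : ℂ} {R r : ℝ} {h F : ℂ → ℂ}
    (hR : 0 ≤ R) (hh : ContinuousOn h (sphere c R)) (hF : ContinuousOn F (sphere c R))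
    (hFr : ∀ z ∈ sphere c R, r ≤ ‖F z‖) (ht : ‖t‖ < r) :
    HasSum (fun n : ℕ => t ^ n * ∮ z in C(c, R), h z / F z ^ (n + 1))
      (∮ z in C(c, R), h z / (F z - t)) := by
  have hr : 0 < r := (norm_nonneg t).trans_lt ht
  have hF0 : ∀ z ∈ sphere c R, F z ≠ 0 := fun z hz => norm_pos_iff.1 (hr.trans_le (hFr z hz))
  obtain ⟨K, hK⟩ := (isCompact_sphere c R).exists_bound_of_continuousOn hh
  have hq : ‖t‖ / r < 1 := (div_lt_one hr).2 ht
  simp_rw [← circleIntegral.integral_const_mul]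
  refine hasSum_circleIntegral_of_dominated hR (bound := fun n => K / r * (‖t‖ / r) ^ n)
    (fun n => ?_) (fun n z hz => ?_)
    ((summable_geometric_of_lt_one (by positivity) hq).mul_left _) (fun z hz => ?_)
  · exact continuousOn_const.mul (hh.div (hF.pow _) fun z hz => pow_ne_zero _ (hF0 z hz))
  · rw [norm_mul, norm_div, norm_pow, norm_pow]
    calc ‖t‖ ^ n * (‖h z‖ / ‖F z‖ ^ (n + 1)) ≤ ‖t‖ ^ n * (K / r ^ (n + 1)) := by
          have hK0 : 0 ≤ K := (norm_nonneg _).trans (hK z hz)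
          gcongr
          exacts [hK z hz, hFr z hz]
      _ = K / r * (‖t‖ / r) ^ n := by rw [div_pow, pow_succ]; field_simp
  · have hq' : ‖t / F z‖ < 1 := by
      rw [norm_div]; exact (div_lt_one (hr.trans_le (hFr z hz))).2 (ht.trans_le (hFr z hz))
    have key := (hasSum_geometric_of_norm_lt_one hq').mul_left (h z / F z)
    rw [show h z / F z * (1 - t / F z)⁻¹ = h z / (F z - t) by field_simp [hF0 z hz]] at key
    have hterm : (fun n : ℕ => t ^ n * (h z / F z ^ (n + 1))) =
        fun n => h z / F z * (t / F z) ^ n := by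
      funext n; rw [div_pow, pow_succ]; ring
    exact hterm ▸ key

theorem circleIntegral_div_eq_of_unique_zero {c g : ℂ} {R : ℝ} {h f : ℂ → ℂ}
    (hh : DifferentiableOn ℂ h (closedBall c R)) (hf : DifferentiableOn ℂ f (closedBall c R))
    (hg : g ∈ ball c R) (hfg : f g = 0) (hf'g : deriv f g ≠ 0)
    (hzero : ∀ z ∈ closedBall c R, f z = 0 → z = g) :
    ∮ z in C(c, R), h z / f z = 2 * π * I * (h g / deriv f g) := by
  set u := dslope f g
  have hu : DifferentiableOn ℂ u (closedBall c R) :=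
    (Complex.differentiableOn_dslope (closedBall_mem_nhds_of_mem hg)).2 hf
  have hfu : ∀ z, f z = (z - g) * u z := fun z => by
    simpa [hfg] using (sub_smul_dslope f g z).symm
  have hug : u g = deriv f g := dslope_same f g
  have hu0 : ∀ z ∈ closedBall c R, u z ≠ 0 := by
    intro z hz huz
    rcases eq_or_ne z g with rfl | hzg
    · exact hf'g (hug ▸ huz)
    · exact hzg (hzero z hz (by rw [hfu, huz, mul_zero]))
  have hsphere : EqOn (fun z => h z / f z) (fun z => (z - g)⁻¹ • (h / u) z) (sphere c R) := by
    intro z hz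
    have hzg : z - g ≠ 0 := sub_ne_zero.2 fun heq => (mem_ball.1 (heq ▸ hg)).ne (mem_sphere.1 hz)
    simp only [smul_eq_mul, Pi.div_apply, hfu z]
    field_simp
  rw [circleIntegral.integral_congr (pos_of_mem_ball hg).le hsphere,
    (hh.div hu hu0).circleIntegral_sub_inv_smul hg, smul_eq_mul, Pi.div_apply, hug]

theorem hasSum_pow_mul_circleIntegral_div_pow_succ_of_injOn {c g : ℂ} {R r : ℝ} {h f : ℂ → ℂ}
    (hh : DifferentiableOn ℂ h (closedBall c R)) (hf : DifferentiableOn ℂ f (closedBall c R))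
    (hinj : InjOn f (closedBall c R)) (hf'g : deriv f g ≠ 0) (hg : g ∈ ball c R)
    (hfr : ∀ z ∈ sphere c R, r ≤ ‖f z‖) (hgr : ‖f g‖ < r) :
    HasSum (fun n : ℕ => f g ^ n * ∮ z in C(c, R), h z / f z ^ (n + 1))
      (2 * π * I * (h g / deriv f g)) := by
  have hsphere : sphere c R ⊆ closedBall c R := sphere_subset_closedBall
  have hres := circleIntegral_div_eq_of_unique_zero hh (hf.sub_const (f g)) hg (sub_self _)
    (by rwa [deriv_sub_const]) fun z hz hfz =>
      hinj hz (ball_subset_closedBall hg) (sub_eq_zero.1 hfz)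
  rw [deriv_sub_const] at hres
  exact hres ▸ hasSum_pow_mul_circleIntegral_div_pow_succ (pos_of_mem_ball hg).le
    (hh.continuousOn.mono hsphere) (hf.continuousOn.mono hsphere) hfr hgr

theorem hasSum_pow_succ_mul_residue_eq_div_deriv {c g : ℂ} {R r : ℝ} {h f : ℂ → ℂ}
    (hh : DifferentiableOn ℂ h (closedBall c R)) (hf : DifferentiableOn ℂ f (closedBall c R))
    (hinj : InjOn f (closedBall c R)) (hf' : ∀ z ∈ closedBall c R, deriv f z ≠ 0)
    (hfc : f c = 0) (hhc : h c = 0) (hg : g ∈ ball c R)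
    (hfr : ∀ z ∈ sphere c R, r ≤ ‖f z‖) (hgr : ‖f g‖ < r) :
    HasSum (fun n : ℕ => f g ^ (n + 1) * ((2 * π * I)⁻¹ * ∮ z in C(c, R), h z / f z ^ (n + 2)))
      (h g / deriv f g) := by
  have hR : 0 < R := pos_of_mem_ball hg
  have hc : c ∈ closedBall c R := mem_closedBall_self hR.le
  have hres0 : ∮ z in C(c, R), h z / f z ^ (0 + 1) = 0 := by
    simpa [hhc] using circleIntegral_div_eq_of_unique_zero hh hf (mem_ball_self hR)
      hfc (hf' c hc) fun z hz hfz => hinj hz hc (hfz.trans hfc.symm)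
  have key := ((hasSum_nat_add_iff' 1).2 (hasSum_pow_mul_circleIntegral_div_pow_succ_of_injOn hh hf
    hinj (hf' g (ball_subset_closedBall hg)) hg hfr hgr)).mul_left (2 * π * I)⁻¹
  rw [Finset.sum_range_one, pow_zero, one_mul, hres0, sub_zero,
    inv_mul_cancel_left₀ two_pi_I_ne_zero] at key
  simpa only [mul_left_comm (2 * (π : ℂ) * I)⁻¹] using key

theorem mapsTo_mul_closedBall_zero {α : Type*} [SeminormedRing α] {m : α} {ε R : ℝ}
    (h : ‖m‖ * ε < R) : MapsTo (m * ·) (closedBall 0 ε) (ball 0 R) := fun z hz =>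
  mem_ball_zero_iff.2 ((norm_mul_le m z).trans_lt
    ((mul_le_mul_of_nonneg_left (mem_closedBall_zero_iff.1 hz) (norm_nonneg m)).trans_lt h))

theorem elliptic_genera_residue_lemma_general
    (R : ℝ) (hR : 0 < R) (f : ℂ → ℂ)
    (hf : DifferentiableOn ℂ f (ball (0 : ℂ) R))
    (hf0 : f 0 = 0) (hf'0 : deriv f 0 ≠ 0) (m : ℂ) :
    ∃ ε > (0 : ℝ), max 1 ‖m‖ * ε < R ∧ ∃ δ > (0 : ℝ),
      (∀ z : ℂ, ‖z‖ ≤ ε → deriv f z ≠ 0) ∧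
      (∀ z : ℂ, z ≠ 0 → ‖z‖ ≤ ε → f z ≠ 0) ∧
      ∀ t : ℂ, 0 < ‖t‖ → ‖t‖ < δ →
        ∃ g : ℂ, (‖g‖ < ε ∧ f g = t) ∧
          (∀ z : ℂ, ‖z‖ < ε → f z = t → z = g) ∧
          HasSum
            (fun n : ℕ =>
              t ^ (n + 1) *
                ((2 * (Real.pi : ℂ) * I)⁻¹ *
                  ∮ z in C(0, ε), f (m * z) / (f z) ^ (n + 2)))
            (f (m * g) / deriv f g) := by
  have hfa : AnalyticAt ℂ f 0 := hf.analyticOnNhd isOpen_ball 0 (mem_ball_self hR)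
  have hmR : ∀ᶠ ε in 𝓝 (0 : ℝ), max 1 ‖m‖ * ε < R :=
    ((continuous_const_mul _).tendsto' 0 0 (mul_zero _)).eventually (gt_mem_nhds hR)
  obtain ⟨ε, ⟨⟨hinj, hderiv⟩, hεR⟩, hε⟩ := ((((hfa.eventually_injOn_closedBall hf'0).and
    hmR).filter_mono nhdsWithin_le_nhds).and (self_mem_nhdsWithin (s := Ioi 0))).exists
  have hεball : closedBall (0 : ℂ) ε ⊆ ball 0 R :=
    closedBall_subset_ball ((le_mul_of_one_le_left hε.le (le_max_left _ _)).trans_lt hεR)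
  have hfne : ∀ z : ℂ, z ≠ 0 → ‖z‖ ≤ ε → f z ≠ 0 := fun z hz0 hz hfz =>
    hz0 (hinj (mem_closedBall_zero_iff.2 hz) (mem_closedBall_self hε.le) (hfz.trans hf0.symm))
  obtain ⟨r, hr, hfr⟩ := (isCompact_sphere (0 : ℂ) ε).exists_forall_le'
    (hf.continuousOn.mono (sphere_subset_closedBall.trans hεball)).norm fun z hz =>
      norm_pos_iff.2 (hfne z (ne_of_mem_sphere hz hε.ne') (mem_sphere_zero_iff_norm.1 hz).le)
  have himage : f '' ball 0 ε ∈ 𝓝 (f 0) :=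
    hfa.hasStrictDerivAt.map_nhds_eq hf'0 ▸ image_mem_map (ball_mem_nhds 0 hε)
  rw [hf0] at himage
  obtain ⟨δ, hδ, hδsub⟩ := Metric.mem_nhds_iff.1 (inter_mem himage (ball_mem_nhds 0 hr))
  refine ⟨ε, hε, hεR, δ, hδ, fun z hz => hderiv z (mem_closedBall_zero_iff.2 hz), hfne,
    fun t _ htδ => ?_⟩
  obtain ⟨⟨g, hg, rfl⟩, hgr⟩ := hδsub (mem_ball_zero_iff.2 htδ)
  have hm : MapsTo (m * ·) (closedBall 0 ε) (ball 0 R) := mapsTo_mul_closedBall_zero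
    ((mul_le_mul_of_nonneg_right (le_max_right _ _) hε.le).trans_lt hεR)
  refine ⟨g, ⟨mem_ball_zero_iff.1 hg, rfl⟩, fun z hz hfz =>
    hinj (mem_closedBall_zero_iff.2 hz.le) (ball_subset_closedBall hg) hfz, ?_⟩
  exact hasSum_pow_succ_mul_residue_eq_div_deriv (hf.comp (by fun_prop) hm) (hf.mono hεball) hinj
    hderiv hf0 (by simp [hf0]) hg hfr (mem_ball_zero_iff.1 hgr)

/-- Lemma 2.5 (single factor case): for `f` holomorphic near `0` with `f 0 = 0`,
`f' 0 ≠ 0` and `m ≠ 0`, the generating series of the residues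
`Res_z f(mz)/f(z)^{n+1}` equals `f(m g(t))/f'(g(t))`, where `g` is the local
inverse of `f`. -/
theorem elliptic_genera_residue_lemma
    (R : ℝ) (hR : 0 < R) (f : ℂ → ℂ)
    (hf : DifferentiableOn ℂ f (ball (0 : ℂ) R))
    (hf0 : f 0 = 0) (hf'0 : deriv f 0 ≠ 0) (m : ℂ) (hm : m ≠ 0) :
    ∃ ε > (0 : ℝ), max 1 ‖m‖ * ε < R ∧ ∃ δ > (0 : ℝ),
      (∀ z : ℂ, ‖z‖ ≤ ε → deriv f z ≠ 0) ∧
      (∀ z : ℂ, z ≠ 0 → ‖z‖ ≤ ε → f z ≠ 0) ∧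
      ∀ t : ℂ, 0 < ‖t‖ → ‖t‖ < δ →
        ∃ g : ℂ, (‖g‖ < ε ∧ f g = t) ∧
          (∀ z : ℂ, ‖z‖ < ε → f z = t → z = g) ∧
          HasSum
            (fun n : ℕ =>
              t ^ (n + 1) *
                ((2 * (Real.pi : ℂ) * I)⁻¹ *
                  ∮ z in C(0, ε), f (m * z) / (f z) ^ (n + 2)))
            (f (m * g) / deriv f g) :=
  elliptic_genera_residue_lemma_general R hR f hf hf0 hf'0 m
end

section
/- Let R > 0, let f be holomorphic on the disk {z ∈ ℂ : |z| < R} with f(0) = 0 and f′(0) ≠ 0, and let m ∈ ℂ. Then for all sufficiently small ε > 0 (in particular with max(1,|m|)·ε < R and f nonvanishing on {0 < |z| ≤ ε}), (1/(2πi)) ∮_{|z|=ε} f(mz)/f(z)² dz = m/f′(0). -/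
open Complex Metric Set

/-!
Write `f z = z · d z` with `d = dslope f 0`, which is holomorphic on the disk, equals `f'(0)` at `0`
and does not vanish on the closed disk of radius `ε`. Then `f(mz)/f(z)² = z⁻¹ · m d(mz)/d(z)²` on
the circle, and the Cauchy integral formula at the centre evaluates the integral to
`m d(0)/d(0)² = m/f'(0)`.
-/

variable {f : ℂ → ℂ}

theorem mul_dslope_zero (hf0 : f 0 = 0) (z : ℂ) : z * dslope f 0 z = f z := by
  simpa [hf0] using sub_smul_dslope f 0 z

theorem dslope_zero_ne_zero (hf0 : f 0 = 0) (hf'0 : deriv f 0 ≠ 0) {z : ℂ}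
    (hz : z ≠ 0 → f z ≠ 0) : dslope f 0 z ≠ 0 := by
  rcases eq_or_ne z 0 with rfl | hz0
  · rwa [dslope_same]
  · intro h
    apply hz hz0
    rw [← mul_dslope_zero hf0, h, mul_zero]

theorem comp_mul_div_sq_eq_inv_mul_dslope (hf0 : f 0 = 0) (m : ℂ) {z : ℂ} (hz : z ≠ 0) :
    f (m * z) / f z ^ 2 = z⁻¹ * (m * dslope f 0 (m * z) / dslope f 0 z ^ 2) := by
  rw [← mul_dslope_zero hf0 z, ← mul_dslope_zero hf0 (m * z)]
  field_simp

theorem mapsTo_const_mul_closedBall_ball {m : ℂ} {ε R : ℝ} (h : ‖m‖ * ε < R) :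
    MapsTo (m * ·) (closedBall 0 ε) (ball 0 R) := fun z hz => by
  rw [mem_closedBall_zero_iff] at hz
  rw [mem_ball_zero_iff, norm_mul]
  exact (mul_le_mul_of_nonneg_left hz (norm_nonneg m)).trans_lt h

/-- Lemma 2.6, case `n = 1`: `Res_z f(mz)/f(z)² = m/f'(0)`. -/
theorem residue_fmz_over_fz_sq
    (R : ℝ) (hR : 0 < R) (f : ℂ → ℂ)
    (hf : DifferentiableOn ℂ f (ball (0 : ℂ) R))
    (hf0 : f 0 = 0) (hf'0 : deriv f 0 ≠ 0) (m : ℂ) :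
    ∀ ε : ℝ, 0 < ε → max 1 ‖m‖ * ε < R →
      (∀ z : ℂ, z ≠ 0 → ‖z‖ ≤ ε → f z ≠ 0) →
      (2 * (Real.pi : ℂ) * I)⁻¹ * (∮ z in C(0, ε), f (m * z) / (f z) ^ 2) =
        m / deriv f 0 := by
  intro ε hε hεR hfne
  have hε_lt : ε < R := (le_mul_of_one_le_left hε.le (le_max_left _ _)).trans_lt hεR
  have hmε_lt : ‖m‖ * ε < R := (mul_le_mul_of_nonneg_right (le_max_right _ _) hε.le).trans_lt hεR
  have hd : DifferentiableOn ℂ (dslope f 0) (ball 0 R) :=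
    (differentiableOn_dslope (ball_mem_nhds _ hR)).2 hf
  have hd_ne : ∀ z ∈ closedBall (0 : ℂ) ε, dslope f 0 z ≠ 0 := fun z hz =>
    dslope_zero_ne_zero hf0 hf'0 fun hz0 => hfne z hz0 (mem_closedBall_zero_iff.1 hz)
  have hF : DifferentiableOn ℂ (fun z => m * dslope f 0 (m * z) / dslope f 0 z ^ 2)
      (closedBall 0 ε) :=
    ((hd.comp (differentiableOn_id.const_mul m)
      (mapsTo_const_mul_closedBall_ball hmε_lt)).const_mul m).div
      ((hd.mono (closedBall_subset_ball hε_lt)).pow 2) fun z hz => pow_ne_zero 2 (hd_ne z hz)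
  have hint : (∮ z in C(0, ε), f (m * z) / (f z) ^ 2) =
      ∮ z in C(0, ε), (z - 0)⁻¹ • (m * dslope f 0 (m * z) / dslope f 0 z ^ 2) :=
    circleIntegral.integral_congr hε.le fun z hz => by
      rw [sub_zero, smul_eq_mul]
      exact comp_mul_div_sq_eq_inv_mul_dslope hf0 m (ne_of_mem_sphere hz hε.ne')
  rw [hint, hF.circleIntegral_sub_inv_smul (mem_ball_self hε), smul_eq_mul,
    inv_mul_cancel_left₀ two_pi_I_ne_zero]
  simp only [mul_zero, dslope_same]
  field_simp
end

section
/- Let R > 0, let f be holomorphic on the disk {z ∈ ℂ : |z| < R} with f(0) = 0 and f′(0) ≠ 0, and let m ∈ ℂ. Then for all sufficiently small ε > 0 (in particular with max(1,|m|)·ε < R and f nonvanishing on {0 < |z| ≤ ε}), (1/(2πi)) ∮_{|z|=ε} f(mz)/f(z)³ dz = (m(m−3)/2) · f″(0)/f′(0)³. -/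
open Complex Metric

/-!
Write `f z = z * g z` with `g = dslope f 0`, so that `g 0 = f' 0` and `f'' 0 = 2 g' 0`. On the
circle the integrand is `h z / z ^ 3` with `h z = f (m z) / g z ^ 3` holomorphic on the closed disc,
so by Cauchy's formula the residue is `h'' 0 / 2`, and the Leibniz rule for `h'' 0` gives
`m ^ 2 f'' 0 / f' 0 ^ 3 - 6 m g' 0 / f' 0 ^ 3 = m (m - 3) f'' 0 / f' 0 ^ 3`.
-/

theorem DifferentiableOn.two_pi_I_inv_mul_circleIntegral_div_sub_pow_succ {h : ℂ → ℂ} {c : ℂ}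
    {R : ℝ} (hR : 0 < R) (hh : DifferentiableOn ℂ h (closedBall c R)) (n : ℕ) :
    (2 * Real.pi * I)⁻¹ * ∮ z in C(c, R), h z / (z - c) ^ (n + 1) =
      iteratedDeriv n h c / n.factorial := by
  have := hh.circleIntegral_one_div_sub_center_pow_smul hR n
  simp only [smul_eq_mul, one_div_mul_eq_div] at this
  rw [this]
  field_simp [two_pi_I_ne_zero]

section
variable {𝕜 : Type*} [NontriviallyNormedField 𝕜]

theorem iteratedDeriv_two_fun_mul {u v : 𝕜 → 𝕜} {x : 𝕜} (hu : ContDiffAt 𝕜 2 u x)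
    (hv : ContDiffAt 𝕜 2 v x) :
    iteratedDeriv 2 (fun y => u y * v y) x =
      iteratedDeriv 2 u x * v x + 2 * deriv u x * deriv v x + u x * iteratedDeriv 2 v x := by
  rw [iteratedDeriv_fun_mul hu hv]
  simp only [Finset.sum_range_succ, Finset.range_one, Finset.sum_singleton, Nat.choose_zero_right,
    Nat.cast_one, iteratedDeriv_zero, one_mul, tsub_zero, Nat.choose_succ_self_right,
    iteratedDeriv_one, Nat.add_one_sub_one, Nat.choose_self, tsub_self]
  ring

theorem iteratedDeriv_two_comp_const_mul {f : 𝕜 → 𝕜} {c x : 𝕜} (hf : ContDiffAt 𝕜 2 f (c * x)) :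
    iteratedDeriv 2 (fun y => f (c * y)) x = c ^ 2 * iteratedDeriv 2 f (c * x) := by
  have hlin : ContDiffAt 𝕜 2 (fun y => c * y) x := by fun_prop
  have := iteratedDeriv_vcomp_two (f := fun y => c * y) hf hlin
  simpa [Function.comp_def, iteratedFDeriv_apply_eq_iteratedDeriv_mul_prod, iteratedDeriv_succ]
    using this

theorem AnalyticAt.dslope {f : 𝕜 → 𝕜} {c : 𝕜} (hf : AnalyticAt 𝕜 f c) :
    AnalyticAt 𝕜 (dslope f c) c := by
  obtain ⟨p, hp⟩ := hf
  exact ⟨_, hp.has_fpower_series_dslope_fslope⟩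

theorem iteratedDeriv_two_eq_two_mul_deriv_dslope [CompleteSpace 𝕜] {f : 𝕜 → 𝕜} {c : 𝕜}
    (hf : AnalyticAt 𝕜 f c) (hfc : f c = 0) : iteratedDeriv 2 f c = 2 * deriv (dslope f c) c := by
  have hfg : f = fun z => (z - c) * dslope f c z := by
    ext z
    simpa [hfc] using (sub_smul_dslope f c z).symm
  conv_lhs => rw [hfg]
  rw [iteratedDeriv_two_fun_mul (by fun_prop) hf.dslope.contDiffAt]
  simp [iteratedDeriv_succ]

theorem iteratedDeriv_two_comp_const_mul_mul_inv_dslope_pow_three [CompleteSpace 𝕜] {f : 𝕜 → 𝕜}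
    (hf : AnalyticAt 𝕜 f 0) (hf0 : f 0 = 0) (hf'0 : deriv f 0 ≠ 0) (m : 𝕜) :
    iteratedDeriv 2 (fun z => f (m * z) * (dslope f 0 z ^ 3)⁻¹) 0 =
      m * (m - 3) * (iteratedDeriv 2 f 0 / deriv f 0 ^ 3) := by
  set g := dslope f 0
  have hg : AnalyticAt 𝕜 g 0 := hf.dslope
  have hg0 : g 0 = deriv f 0 := dslope_same f 0
  have hg30 : g 0 ^ 3 ≠ 0 := pow_ne_zero 3 (hg0 ▸ hf'0)
  have hf''0 : iteratedDeriv 2 f 0 = 2 * deriv g 0 :=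
    iteratedDeriv_two_eq_two_mul_deriv_dslope hf hf0
  have hfm : AnalyticAt 𝕜 (fun z => f (m * z)) 0 :=
    AnalyticAt.comp (g := f) (by simpa using hf) (by fun_prop)
  have hk : HasDerivAt (fun z => (g z ^ 3)⁻¹) _ 0 :=
    (hg.differentiableAt.hasDerivAt.fun_pow 3).fun_inv hg30
  rw [iteratedDeriv_two_fun_mul hfm.contDiffAt ((hg.fun_pow 3).fun_inv hg30).contDiffAt,
    iteratedDeriv_two_comp_const_mul (by simpa using hf.contDiffAt), hk.deriv,
    deriv_comp_mul_left]
  simp only [mul_zero, hf0, hg0, hf''0, zero_mul, add_zero, smul_eq_mul]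
  field_simp
  ring
end

/-- Lemma 2.6, case `n = 2`: `Res_z f(mz)/f(z)³ = (m(m−3)/2)·f''(0)/f'(0)³`. -/
theorem residue_fmz_over_fz_cube
    (R : ℝ) (hR : 0 < R) (f : ℂ → ℂ)
    (hf : DifferentiableOn ℂ f (ball (0 : ℂ) R))
    (hf0 : f 0 = 0) (hf'0 : deriv f 0 ≠ 0) (m : ℂ) :
    ∀ ε : ℝ, 0 < ε → max 1 ‖m‖ * ε < R →
      (∀ z : ℂ, z ≠ 0 → ‖z‖ ≤ ε → f z ≠ 0) →
      (2 * (Real.pi : ℂ) * I)⁻¹ * (∮ z in C(0, ε), f (m * z) / (f z) ^ 3) =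
        m * (m - 3) / 2 * (iteratedDeriv 2 f 0 / (deriv f 0) ^ 3) := by
  intro ε hε hεR hfz
  set g := dslope f 0
  have hfg (z : ℂ) : f z = z * g z := by simpa [hf0] using (sub_smul_dslope f 0 z).symm
  have hg : DifferentiableOn ℂ g (ball 0 R) :=
    (differentiableOn_dslope (ball_mem_nhds 0 hR)).2 hf
  have hball : closedBall (0 : ℂ) ε ⊆ ball 0 R :=
    closedBall_subset_ball (by nlinarith [le_max_left 1 ‖m‖])
  have hmball : Set.MapsTo (m * ·) (closedBall (0 : ℂ) ε) (ball 0 R) := fun z hz => by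
    rw [mem_closedBall_zero_iff] at hz
    rw [mem_ball_zero_iff, norm_mul]
    nlinarith [le_max_right 1 ‖m‖, norm_nonneg m, norm_nonneg z]
  have hg_ne (z : ℂ) (hz : z ∈ closedBall (0 : ℂ) ε) : g z ≠ 0 := by
    rcases eq_or_ne z 0 with rfl | hz0
    · simpa [g, dslope_same] using hf'0
    · exact right_ne_zero_of_mul (hfg z ▸ hfz z hz0 (mem_closedBall_zero_iff.1 hz))
  have hdiff : DifferentiableOn ℂ (fun z => f (m * z) * (g z ^ 3)⁻¹) (closedBall 0 ε) :=
    (hf.comp (by fun_prop) hmball).mul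
      (((hg.mono hball).pow 3).inv fun z hz => pow_ne_zero 3 (hg_ne z hz))
  have hint : Set.EqOn (fun z => f (m * z) / f z ^ 3)
      (fun z => f (m * z) * (g z ^ 3)⁻¹ / (z - 0) ^ (2 + 1)) (sphere 0 ε) := fun z _ => by
    simp only [hfg z, sub_zero]
    ring
  rw [circleIntegral.integral_congr hε.le hint,
    hdiff.two_pi_I_inv_mul_circleIntegral_div_sub_pow_succ hε,
    iteratedDeriv_two_comp_const_mul_mul_inv_dslope_pow_three
      (hf.analyticAt (ball_mem_nhds 0 hR)) hf0 hf'0]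
  norm_num
  ring
end

section
/- Let R > 0, let f be holomorphic on the disk {z ∈ ℂ : |z| < R} with f(0) = 0 and f′(0) ≠ 0, and let m ∈ ℂ. Then for all sufficiently small ε > 0 (in particular with max(1,|m|)·ε < R and f nonvanishing on {0 < |z| ≤ ε}), (1/(2πi)) ∮_{|z|=ε} f(mz)/f(z)⁴ dz = ((m³−4m)/6) · f‴(0)/f′(0)⁴ − ((2m²−5m)/2) · f″(0)²/f′(0)⁵. -/
/-!
Write `f z = z u(z)` with `u = dslope f 0`, so that `u(0) = f'(0) ≠ 0` and, for `z ≠ 0`,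
`f(mz)/f(z)⁴ = h(z)/z³` with `h(z) = m u(mz) u(z)⁻⁴` holomorphic on the closed disk of radius `ε`.
The Cauchy integral formula turns the residue into `h''(0)/2`, which the Leibniz and chain rules
express through `u(0), u'(0), u''(0)`; finally `u⁽ⁿ⁾(0) = f⁽ⁿ⁺¹⁾(0)/(n+1)`.
-/

open Complex Metric Filter Topology

section IteratedDeriv

variable {𝕜 : Type*} [NontriviallyNormedField 𝕜]

theorem iteratedDeriv_comp_const_mul_field (n : ℕ) (f : 𝕜 → 𝕜) (c x : 𝕜) :
    iteratedDeriv n (fun y => f (c * y)) x = c ^ n * iteratedDeriv n f (c * x) := by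
  induction n generalizing x with
  | zero => simp
  | succ n ih =>
    rw [iteratedDeriv_succ, funext ih, deriv_const_mul_field']
    beta_reduce
    rw [deriv_comp_mul_left c (iteratedDeriv n f), iteratedDeriv_succ, smul_eq_mul, pow_succ,
      mul_assoc]

theorem iteratedDeriv_succ_of_eq_id_mul {f u : 𝕜 → 𝕜} (hfu : ∀ z, f z = z * u z) {n : ℕ}
    (hu : ContDiffAt 𝕜 (n + 1) u 0) :
    iteratedDeriv (n + 1) f 0 = (n + 1) * iteratedDeriv n u 0 := by
  rw [show f = fun z => z * u z from funext hfu,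
    iteratedDeriv_fun_mul (contDiffAt_id (n := ↑(n + 1))) (by exact_mod_cast hu),
    Finset.sum_eq_single 1]
  · simp
  · intro i _ hi
    simp [iteratedDeriv_fun_id_zero, hi]
  · simp

variable [CompleteSpace 𝕜]

theorem iteratedDeriv_two_comp {g φ : 𝕜 → 𝕜} {x : 𝕜} (hg : AnalyticAt 𝕜 g (φ x))
    (hφ : AnalyticAt 𝕜 φ x) :
    iteratedDeriv 2 (fun y => g (φ y)) x =
      iteratedDeriv 2 g (φ x) * deriv φ x ^ 2 + deriv g (φ x) * iteratedDeriv 2 φ x := by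
  have hderiv : deriv (fun y => g (φ y)) =ᶠ[𝓝 x] fun y => deriv g (φ y) * deriv φ y := by
    filter_upwards [hφ.eventually_analyticAt, hφ.continuousAt.eventually hg.eventually_analyticAt]
      with y hφy hgy
    exact deriv_comp y hgy.differentiableAt hφy.differentiableAt
  have hg' : HasDerivAt (fun y => deriv g (φ y)) (deriv (deriv g) (φ x) * deriv φ x) x :=
    hg.deriv.differentiableAt.hasDerivAt.comp x hφ.differentiableAt.hasDerivAt
  simp only [iteratedDeriv_succ, iteratedDeriv_zero]
  rw [hderiv.deriv_eq, (hg'.fun_mul hφ.deriv.differentiableAt.hasDerivAt).deriv]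
  ring

theorem iteratedDeriv_two_zpow {u : 𝕜 → 𝕜} {x : 𝕜} (hu : AnalyticAt 𝕜 u x) (hx : u x ≠ 0)
    (k : ℤ) :
    iteratedDeriv 2 (fun y => u y ^ k) x =
      k * (k - 1) * u x ^ (k - 2) * deriv u x ^ 2 + k * u x ^ (k - 1) * iteratedDeriv 2 u x := by
  rw [iteratedDeriv_two_comp (g := (· ^ k)) (analyticAt_id.zpow hx) hu, deriv_zpow,
    iteratedDeriv_eq_iterate, iter_deriv_zpow]
  simp [Finset.prod_range_succ]

theorem iteratedDeriv_two_comp_const_mul_mul_zpow {u : 𝕜 → 𝕜} (hu : AnalyticAt 𝕜 u 0)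
    (hu0 : u 0 ≠ 0) (m : 𝕜) (k : ℤ) :
    iteratedDeriv 2 (fun z => u (m * z) * u z ^ k) 0 =
      u 0 ^ (k - 2) * ((m ^ 2 + k) * u 0 ^ 2 * iteratedDeriv 2 u 0 +
        k * (2 * m + k - 1) * u 0 * deriv u 0 ^ 2) := by
  have hscaled : AnalyticAt 𝕜 (fun z => u (m * z)) 0 :=
    (by rwa [mul_zero] : AnalyticAt 𝕜 u (m * 0)).comp (analyticAt_const.mul analyticAt_id)
  have hzpow : AnalyticAt 𝕜 (fun z => u z ^ k) 0 := hu.zpow hu0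
  have hzpow' : deriv (fun z => u z ^ k) 0 = k * u 0 ^ (k - 1) * deriv u 0 :=
    deriv_comp (h₂ := (· ^ k)) 0 (differentiableAt_zpow.2 (Or.inl hu0)) hu.differentiableAt
      |>.trans (by rw [deriv_zpow])
  rw [iteratedDeriv_fun_mul hscaled.contDiffAt hzpow.contDiffAt]
  simp only [Finset.sum_range_succ, Finset.sum_range_zero, Nat.reduceSub,
    iteratedDeriv_comp_const_mul_field, iteratedDeriv_two_zpow hu hu0, iteratedDeriv_one, hzpow',
    iteratedDeriv_zero, mul_zero]
  have h1 : u 0 ^ (k - 1) = u 0 ^ (k - 2) * u 0 := by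
    rw [← zpow_add_one₀ hu0]; ring_nf
  have h0 : u 0 ^ k = u 0 ^ (k - 2) * u 0 ^ 2 := by
    rw [← zpow_natCast, ← zpow_add₀ hu0]; ring_nf
  rw [h1, h0]
  norm_num
  ring

end IteratedDeriv

theorem comp_mul_div_pow_four_of_eq_id_mul {K : Type*} [Field K] {f u : K → K}
    (hfu : ∀ z, f z = z * u z) (m : K) {z : K} (hz : z ≠ 0) :
    f (m * z) / f z ^ 4 = m * (u (m * z) * u z ^ (-4 : ℤ)) / z ^ 3 := by
  rw [hfu, hfu, zpow_neg]
  rcases eq_or_ne (u z) 0 with huz | huz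
  · simp [huz]
  · field_simp

theorem mul_mem_ball_zero_of_max_one_mul_lt {A : Type*} [SeminormedRing A] {m z : A} {ε R : ℝ}
    (hz : z ∈ closedBall (0 : A) ε) (h : max 1 ‖m‖ * ε < R) : m * z ∈ ball (0 : A) R := by
  rw [mem_closedBall_zero_iff] at hz
  rw [mem_ball_zero_iff]
  nlinarith [norm_mul_le m z, le_max_right 1 ‖m‖, norm_nonneg z, norm_nonneg m]

theorem DifferentiableOn.analyticOnNhd_dslope {f : ℂ → ℂ} {c : ℂ} {R : ℝ}
    (hf : DifferentiableOn ℂ f (ball c R)) (hR : 0 < R) : AnalyticOnNhd ℂ (dslope f c) (ball c R) :=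
  ((differentiableOn_dslope (ball_mem_nhds c hR)).2 hf).analyticOnNhd isOpen_ball

theorem DifferentiableOn.inv_two_pi_I_mul_circleIntegral_div_sub_pow {h : ℂ → ℂ} {c : ℂ} {r : ℝ}
    (hh : DifferentiableOn ℂ h (closedBall c r)) (hr : 0 < r) (n : ℕ) :
    (2 * (Real.pi : ℂ) * I)⁻¹ * ∮ z in C(c, r), h z / (z - c) ^ (n + 1) =
      iteratedDeriv n h c / n.factorial := by
  have hcauchy := hh.circleIntegral_one_div_sub_center_pow_smul hr n
  simp only [smul_eq_mul, one_div, ← div_eq_inv_mul] at hcauchy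
  rw [hcauchy]
  field_simp [two_pi_I_ne_zero]

theorem residue_fmz_over_fz_fourth_general
    (R : ℝ) (f : ℂ → ℂ)
    (hf : DifferentiableOn ℂ f (ball (0 : ℂ) R))
    (hf0 : f 0 = 0) (hf'0 : deriv f 0 ≠ 0) (m : ℂ) :
    ∀ ε : ℝ, 0 < ε → max 1 ‖m‖ * ε < R →
      (∀ z : ℂ, z ≠ 0 → ‖z‖ ≤ ε → f z ≠ 0) →
      (2 * (Real.pi : ℂ) * I)⁻¹ * (∮ z in C(0, ε), f (m * z) / (f z) ^ 4) =
        (m ^ 3 - 4 * m) / 6 * (iteratedDeriv 3 f 0 / (deriv f 0) ^ 4) -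
          (2 * m ^ 2 - 5 * m) / 2 * ((iteratedDeriv 2 f 0) ^ 2 / (deriv f 0) ^ 5) := by
  intro ε hε hεR hfz
  have hεR' : ε < R := (le_mul_of_one_le_left hε.le (le_max_left _ _)).trans_lt hεR
  have hball : closedBall (0 : ℂ) ε ⊆ ball 0 R := closedBall_subset_ball hεR'
  have h0 : (0 : ℂ) ∈ closedBall 0 ε := mem_closedBall_self hε.le
  set u := dslope f 0
  have hfu (z : ℂ) : f z = z * u z := by simpa [hf0] using (sub_smul_dslope f 0 z).symm
  have hu : AnalyticOnNhd ℂ u (ball 0 R) := hf.analyticOnNhd_dslope (hε.trans hεR')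
  have hu0 : u 0 = deriv f 0 := dslope_same f 0
  have hu_ne (z : ℂ) (hz : z ∈ closedBall (0 : ℂ) ε) : u z ≠ 0 := by
    rcases eq_or_ne z 0 with rfl | hz0
    · exact hu0 ▸ hf'0
    · exact right_ne_zero_of_mul (hfu z ▸ hfz z hz0 (mem_closedBall_zero_iff.1 hz))
  have hh : DifferentiableOn ℂ (fun z => m * (u (m * z) * u z ^ (-4 : ℤ))) (closedBall 0 ε) :=
    fun z hz => (((hu _ (mul_mem_ball_zero_of_max_one_mul_lt hz hεR)).differentiableAt.comp z
      (differentiableAt_id.const_mul m)).mul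
        ((hu z (hball hz)).differentiableAt.zpow (Or.inl (hu_ne z hz)))).const_mul m
      |>.differentiableWithinAt
  have hintegrand : Set.EqOn (fun z => f (m * z) / f z ^ 4)
      (fun z => m * (u (m * z) * u z ^ (-4 : ℤ)) / (z - 0) ^ (2 + 1)) (sphere 0 ε) := fun z hz => by
    simpa using comp_mul_div_pow_four_of_eq_id_mul hfu m (ne_of_mem_sphere hz hε.ne')
  have hu_an : AnalyticAt ℂ u 0 := hu 0 (hball h0)
  rw [circleIntegral.integral_congr hε.le hintegrand,
    hh.inv_two_pi_I_mul_circleIntegral_div_sub_pow hε 2, iteratedDeriv_const_mul_field,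
    iteratedDeriv_two_comp_const_mul_mul_zpow hu_an (hu_ne 0 h0),
    iteratedDeriv_succ_of_eq_id_mul hfu hu_an.contDiffAt,
    iteratedDeriv_succ_of_eq_id_mul hfu hu_an.contDiffAt, ← hu0, iteratedDeriv_one]
  have hu0_ne := hu_ne 0 h0
  norm_num
  field_simp
  ring

/-- Lemma 2.6, case `n = 3`:
`Res_z f(mz)/f(z)⁴ = ((m³−4m)/6)·f'''(0)/f'(0)⁴ − ((2m²−5m)/2)·f''(0)²/f'(0)⁵`. -/
theorem residue_fmz_over_fz_fourth
    (R : ℝ) (hR : 0 < R) (f : ℂ → ℂ)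
    (hf : DifferentiableOn ℂ f (ball (0 : ℂ) R))
    (hf0 : f 0 = 0) (hf'0 : deriv f 0 ≠ 0) (m : ℂ) :
    ∀ ε : ℝ, 0 < ε → max 1 ‖m‖ * ε < R →
      (∀ z : ℂ, z ≠ 0 → ‖z‖ ≤ ε → f z ≠ 0) →
      (2 * (Real.pi : ℂ) * I)⁻¹ * (∮ z in C(0, ε), f (m * z) / (f z) ^ 4) =
        (m ^ 3 - 4 * m) / 6 * (iteratedDeriv 3 f 0 / (deriv f 0) ^ 4) -
          (2 * m ^ 2 - 5 * m) / 2 * ((iteratedDeriv 2 f 0) ^ 2 / (deriv f 0) ^ 5) :=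
  residue_fmz_over_fz_fourth_general R f hf hf0 hf'0 m
end

section
/- For all integers m ≥ 1 and N ≥ 2 and every real ε with 0 < ε < 1/m, (1/(2πi)) ∮_{|z|=ε} m(1+z)^N / (z^{N−1}(1+mz)) dz = ∑_{k=2}^{N} (−1)^k · binom(N,k) · m^{k−1}. -/
/-!
The disc `‖z‖ ≤ ε` contains no zero of `1 + m z`, so the only pole inside is `z = 0`.
Writing `a = -m`, the identity `1 / (z ^ (j + 1) (1 - a z)) = 1 / z ^ (j + 1) + a / (z ^ j (1 - a z))`
lowers the order of that pole by one at the cost of the integral `∮ p(z) / z ^ (j + 1) = 2πi · coeff_j p`;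
at order `0` the integral vanishes by Cauchy–Goursat. Hence the residue is
`m · ∑_{t < N-1} (-m) ^ (N - 2 - t) · C(N, t)`, which is the stated sum after substituting `k = N - t`.
-/

open Complex Metric Polynomial Real

theorem circleIntegral_eval_div_pow_succ (p : ℂ[X]) (j : ℕ) {R : ℝ} (hR : 0 < R) :
    (∮ z in C(0, R), p.eval z / z ^ (j + 1)) = 2 * π * I * p.coeff j := by
  set n := p.natDegree + j + 1
  have hterm : ∀ i, (∮ z in C(0, R), p.coeff i * (z - 0) ^ ((i : ℤ) - (j + 1))) =
      if i = j then 2 * π * I * p.coeff j else 0 := by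
    intro i
    rw [circleIntegral.integral_const_mul]
    split_ifs with h
    · subst h
      simp only [show (i : ℤ) - (i + 1) = -1 by ring, zpow_neg, zpow_one,
        circleIntegral.integral_sub_center_inv 0 hR.ne', mul_comm]
    · rw [circleIntegral.integral_sub_zpow_of_ne (by omega), mul_zero]
  have hexpand : Set.EqOn (fun z => p.eval z / z ^ (j + 1))
      (fun z => ∑ i ∈ Finset.range n, p.coeff i * (z - 0) ^ ((i : ℤ) - (j + 1)))
      (sphere 0 R) := by
    intro z hz
    have hz : z ≠ 0 := ne_of_mem_sphere hz hR.ne'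
    simp only [eval_eq_sum_range' (by omega : p.natDegree < n), Finset.sum_div, sub_zero,
      zpow_sub₀ hz, zpow_natCast, zpow_add_one₀ hz, pow_succ, mul_div_assoc]
  have hint : ∀ i ∈ Finset.range n,
      CircleIntegrable (fun z => p.coeff i * (z - 0) ^ ((i : ℤ) - (j + 1))) 0 R := fun i _ =>
    .const_fun_smul <|
      circleIntegrable_sub_zpow_iff.2 (.inr (.inr (by simp [abs_of_pos hR, hR.ne])))
  rw [circleIntegral.integral_congr hR.le hexpand, circleIntegral.integral_fun_sum hint,
    Finset.sum_congr rfl fun i _ => hterm i, Finset.sum_ite_eq', if_pos (by simp [n])]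

theorem one_sub_mul_ne_zero_of_norm_le {a z : ℂ} {R : ℝ} (ha : ‖a‖ * R < 1) (hz : ‖z‖ ≤ R) :
    1 - a * z ≠ 0 := by
  rw [sub_ne_zero]
  refine fun h => (norm_mul_le_of_le (le_refl ‖a‖) hz).not_gt ?_
  simpa [← h] using ha

theorem circleIntegral_eval_div_pow_mul_one_sub (p : ℂ[X]) {a : ℂ} {R : ℝ} (hR : 0 < R)
    (ha : ‖a‖ * R < 1) (j : ℕ) :
    (∮ z in C(0, R), p.eval z / (z ^ j * (1 - a * z))) =
      2 * π * I * ∑ t ∈ Finset.range j, a ^ (j - 1 - t) * p.coeff t := by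
  have hsphere : ∀ z ∈ sphere (0 : ℂ) R, z ≠ 0 ∧ 1 - a * z ≠ 0 := fun z hz =>
    ⟨ne_of_mem_sphere hz hR.ne', one_sub_mul_ne_zero_of_norm_le ha (by simp_all)⟩
  induction j with
  | zero =>
    simp only [pow_zero, one_mul, Finset.range_zero, Finset.sum_empty, mul_zero]
    refine DiffContOnCl.circleIntegral_eq_zero hR.le
      (DifferentiableOn.diffContOnCl_ball (U := closedBall 0 R) ?_ subset_rfl)
    refine fun z hz => ((by fun_prop : Differentiable ℂ p.eval) z).div (by fun_prop) ?_
      |>.differentiableWithinAt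
    exact one_sub_mul_ne_zero_of_norm_le ha (by simpa using hz)
  | succ j ih =>
    have hsplit : Set.EqOn (fun z => p.eval z / (z ^ (j + 1) * (1 - a * z)))
        (fun z => p.eval z / z ^ (j + 1) + a * (p.eval z / (z ^ j * (1 - a * z))))
        (sphere 0 R) := by
      intro z hz
      obtain ⟨hz0, hz1⟩ := hsphere z hz
      field_simp
      ring
    have hint₁ : CircleIntegrable (fun z => p.eval z / z ^ (j + 1)) 0 R :=
      ContinuousOn.circleIntegrable hR.le <| ContinuousOn.div (by fun_prop) (by fun_prop)
        fun z hz => pow_ne_zero _ (hsphere z hz).1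
    have hint₂ : CircleIntegrable (fun z => a * (p.eval z / (z ^ j * (1 - a * z)))) 0 R :=
      ContinuousOn.circleIntegrable hR.le <| continuousOn_const.mul <|
        ContinuousOn.div (by fun_prop) (by fun_prop)
        fun z hz => mul_ne_zero (pow_ne_zero _ (hsphere z hz).1) (hsphere z hz).2
    have hpow : ∀ t ∈ Finset.range j, a ^ (j + 1 - 1 - t) * p.coeff t =
        a * (a ^ (j - 1 - t) * p.coeff t) := fun t ht => by
      rw [← mul_assoc, ← pow_succ', show j + 1 - 1 - t = j - 1 - t + 1 by grind]
    rw [circleIntegral.integral_congr hR.le hsplit, circleIntegral.integral_add hint₁ hint₂,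
      circleIntegral.integral_const_mul, ih, circleIntegral_eval_div_pow_succ p j hR,
      Finset.sum_range_succ, Finset.sum_congr rfl hpow, ← Finset.mul_sum]
    simp only [Nat.add_sub_cancel, Nat.sub_self, pow_zero, one_mul]
    ring

theorem mul_sum_range_neg_pow_mul_choose {A : Type*} [CommRing A] (x : A) (N : ℕ) :
    x * ∑ t ∈ Finset.range (N - 1), (-x) ^ (N - 1 - 1 - t) * (N.choose t : A) =
      ∑ k ∈ Finset.Icc 2 N, (-1) ^ k * (N.choose k : A) * x ^ (k - 1) := by
  rw [Finset.mul_sum]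
  refine Finset.sum_nbij' (N - ·) (N - ·) ?_ ?_ ?_ ?_ ?_
  iterate 4
    intro t ht
    simp only [Finset.mem_range, Finset.mem_Icc] at ht ⊢
    omega
  intro t ht
  obtain ⟨e, rfl⟩ : ∃ e, N = t + 2 + e :=
    Nat.exists_eq_add_of_le (by simp only [Finset.mem_range] at ht; omega)
  rw [Nat.choose_symm (by omega), show t + 2 + e - 1 - 1 - t = e by omega,
    show t + 2 + e - t = e + 2 by omega, show e + 2 - 1 = e + 1 by omega, neg_pow]
  ring

theorem euler_number_hypersurface_general
    (m N : ℕ) (hm : 1 ≤ m) (ε : ℝ) (hε : 0 < ε) (hεm : ε < 1 / m) :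
    (2 * (Real.pi : ℂ) * I)⁻¹ *
        (∮ z in C(0, ε), (m : ℂ) * (1 + z) ^ N / (z ^ (N - 1) * (1 + (m : ℂ) * z))) =
      ∑ k ∈ Finset.Icc 2 N, (-1 : ℂ) ^ k * (N.choose k : ℂ) * (m : ℂ) ^ (k - 1) := by
  have hmε : ‖-(m : ℂ)‖ * ε < 1 := by
    simpa using (lt_div_iff₀' (by exact_mod_cast hm)).1 hεm
  have hintegrand : (fun z : ℂ => (m : ℂ) * (1 + z) ^ N / (z ^ (N - 1) * (1 + (m : ℂ) * z))) =
      fun z => m * (((1 + X) ^ N).eval z / (z ^ (N - 1) * (1 - -(m : ℂ) * z))) := by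
    funext z
    simp only [eval_pow, eval_add, eval_one, eval_X, neg_mul, sub_neg_eq_add, mul_div_assoc]
  rw [hintegrand, circleIntegral.integral_const_mul,
    circleIntegral_eval_div_pow_mul_one_sub _ hε hmε, ← mul_sum_range_neg_pow_mul_choose]
  simp only [coeff_one_add_X_pow]
  field_simp

/-- The Euler number of a smooth degree-`m` hypersurface in `ℂP^{N-1}`, expressed
as a residue, equals `∑_{k=2}^N (−1)^k C(N,k) m^{k−1}`. -/
theorem euler_number_hypersurface
    (m N : ℕ) (hm : 1 ≤ m) (hN : 2 ≤ N) (ε : ℝ) (hε : 0 < ε) (hεm : ε < 1 / m) :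
    (2 * (Real.pi : ℂ) * I)⁻¹ *
        (∮ z in C(0, ε), (m : ℂ) * (1 + z) ^ N / (z ^ (N - 1) * (1 + (m : ℂ) * z))) =
      ∑ k ∈ Finset.Icc 2 N, (-1 : ℂ) ^ k * (N.choose k : ℂ) * (m : ℂ) ^ (k - 1) :=
  euler_number_hypersurface_general m N hm ε hε hεm
end

section
/- Fix integers r ≥ 1 and m₁, …, m_r ≥ 1, and a real ε with 0 < ε < 1/max(m₁,…,m_r). For each integer N ≥ r+1 set χ_N = (1/(2πi)) ∮_{|z|=ε} (m₁⋯m_r)·(1+z)^N / (z^{N−r}·(1+m₁z)⋯(1+m_r z)) dz. Then there exists δ > 0 such that for every t ∈ ℂ with |t| < δ, the series ∑_{N=r+1}^∞ χ_N · t^{N−1} converges with sum equal to (1/(1−t)²) · ∏_{j=1}^{r} m_j t / (1+(m_j−1)t). -/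
/-!
Write the `n`-th term as `(2πi)⁻¹ ∮ tʳ g(z) (1 + z)ⁿ tⁿ / zⁿ⁺¹ dz` with
`g(z) = ∏ mᵢ (1 + z)ʳ⁺¹ / ∏ (1 + mᵢ z)`, holomorphic on a neighbourhood of the closed disc
`|z| ≤ ε`. For small `t` this is a geometric series in `t (1 + z) / z`, uniformly convergent on
`|z| = ε`, with sum `g(z) / (z - t (1 + z)) = g(z) / ((1 - t) (z - w))`, `w = t / (1 - t)`.
Summing under the integral and applying Cauchy's integral formula at `w`, which lies inside the
circle, gives `tʳ g(w) / (1 - t)`; substituting `w` yields the product.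
-/

open Complex Metric

theorem hasSum_circleIntegral_of_norm_le {E : Type*} [NormedAddCommGroup E] [NormedSpace ℂ E]
    {f : ℕ → ℂ → E} {F : ℂ → E} {c : ℂ} {R : ℝ} {u : ℕ → ℝ}
    (hf : ∀ n, CircleIntegrable (f n) c R) (hu : Summable u)
    (hfu : ∀ n, ∀ z ∈ sphere c |R|, ‖f n z‖ ≤ u n)
    (hF : ∀ z ∈ sphere c |R|, HasSum (fun n ↦ f n z) (F z)) :
    HasSum (fun n ↦ ∮ z in C(c, R), f n z) (∮ z in C(c, R), F z) := by
  refine intervalIntegral.hasSum_integral_of_dominated_convergence (fun n _ ↦ |R| * u n)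
    (fun n ↦ ((circleIntegrable_iff R).1 (hf n)).def'.aestronglyMeasurable)
    (fun n ↦ .of_forall fun θ _ ↦ ?_) (.of_forall fun _ _ ↦ hu.mul_left _)
    intervalIntegrable_const
    (.of_forall fun θ _ ↦ (hF _ (circleMap_mem_sphere' c R θ)).const_smul _)
  rw [norm_smul, deriv_circleMap, norm_mul, norm_I, mul_one, norm_circleMap_zero]
  exact mul_le_mul_of_nonneg_left (hfu n _ (circleMap_mem_sphere' c R θ)) (abs_nonneg R)

theorem one_add_pow_div_pow_succ_mul (z s : ℂ) (n : ℕ) :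
    (1 + z) ^ n / z ^ (n + 1) * s ^ n = z⁻¹ * (s * (1 + z) / z) ^ n := by
  rw [div_pow, mul_pow]
  ring

theorem hasSum_one_add_pow_div_pow_succ_mul {z s : ℂ} (hz : z ≠ 0)
    (h : ‖s * (1 + z) / z‖ < 1) :
    HasSum (fun n : ℕ ↦ (1 + z) ^ n / z ^ (n + 1) * s ^ n) (z - s * (1 + z))⁻¹ := by
  have hden : z * (1 - s * (1 + z) / z) = z - s * (1 + z) := by field_simp
  have := (hasSum_geometric_of_norm_lt_one h).mul_left z⁻¹
  rwa [← funext (one_add_pow_div_pow_succ_mul z s), ← mul_inv, hden] at this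

theorem norm_mul_one_add_div_le_of_norm_eq {s z : ℂ} {R : ℝ} (hz : ‖z‖ = R) :
    ‖s * (1 + z) / z‖ ≤ ‖s‖ * (1 + R) / R := by
  have h1z : ‖1 + z‖ ≤ 1 + R := by simpa [hz] using norm_add_le (1 : ℂ) z
  rw [norm_div, norm_mul, hz]
  gcongr
  exact hz ▸ norm_nonneg z

theorem hasSum_circleIntegral_mul_one_add_pow_div_pow_succ_mul {g : ℂ → ℂ} {R : ℝ} (hR : 0 < R)
    (hg : ContinuousOn g (sphere 0 R)) {s : ℂ} (hs : ‖s‖ * (1 + R) < R) :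
    HasSum (fun n : ℕ ↦ ∮ z in C(0, R), g z * (1 + z) ^ n / z ^ (n + 1) * s ^ n)
      (∮ z in C(0, R), g z * (z - s * (1 + z))⁻¹) := by
  rw [← abs_of_pos hR] at hg
  have hnorm : ∀ z ∈ sphere (0 : ℂ) |R|, ‖z‖ = R := fun z hz ↦ by simpa [abs_of_pos hR] using hz
  have hz0 : ∀ z ∈ sphere (0 : ℂ) |R|, z ≠ 0 := fun z hz h ↦ by
    simpa [h, hR.ne] using hnorm z hz
  obtain ⟨C, hC⟩ := (isCompact_sphere (0 : ℂ) |R|).exists_bound_of_continuousOn hg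
  have hq : ‖s‖ * (1 + R) / R < 1 := (div_lt_one hR).2 hs
  refine hasSum_circleIntegral_of_norm_le
    (fun n ↦ ContinuousOn.circleIntegrable' <|
      ((hg.mul (by fun_prop)).div (by fun_prop) fun z hz ↦ pow_ne_zero _ (hz0 z hz)).mul
        continuousOn_const)
    ((summable_geometric_of_lt_one (by positivity) hq).mul_left (C / R))
    (fun n z hz ↦ ?_) (fun z hz ↦ ?_)
  · calc ‖g z * (1 + z) ^ n / z ^ (n + 1) * s ^ n‖
        = ‖g z‖ * (‖z‖⁻¹ * ‖s * (1 + z) / z‖ ^ n) := by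
          rw [mul_div_assoc, mul_assoc, one_add_pow_div_pow_succ_mul, norm_mul, norm_mul,
            norm_inv, norm_pow]
      _ ≤ C * (R⁻¹ * (‖s‖ * (1 + R) / R) ^ n) := by
          rw [hnorm z hz]
          gcongr
          exacts [(norm_nonneg _).trans (hC z hz), hC z hz,
            norm_mul_one_add_div_le_of_norm_eq (hnorm z hz)]
      _ = C / R * (‖s‖ * (1 + R) / R) ^ n := by ring
  · simpa only [mul_div_assoc, mul_assoc] using
      (hasSum_one_add_pow_div_pow_succ_mul (hz0 z hz)
        ((norm_mul_one_add_div_le_of_norm_eq (hnorm z hz)).trans_lt hq)).mul_left (g z)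

theorem two_pi_I_inv_mul_circleIntegral_mul_inv_sub_mul_one_add {g : ℂ → ℂ} {R : ℝ}
    (hg : DiffContOnCl ℂ g (ball 0 R)) {s : ℂ} (h1s : 1 - s ≠ 0) (hw : s / (1 - s) ∈ ball 0 R) :
    (2 * Real.pi * I)⁻¹ * ∮ z in C(0, R), g z * (z - s * (1 + z))⁻¹
      = g (s / (1 - s)) / (1 - s) := by
  have hfactor : ∀ z, g z * (z - s * (1 + z))⁻¹ = (z - s / (1 - s))⁻¹ • (1 - s)⁻¹ • g z := by
    intro z
    have : z - s * (1 + z) = (1 - s) * (z - s / (1 - s)) := by field_simp; ring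
    rw [this, smul_eq_mul, smul_eq_mul, mul_inv]
    ring
  simp_rw [hfactor]
  exact ((hg.const_smul (1 - s)⁻¹).two_pi_i_inv_smul_circleIntegral_sub_inv_smul hw).trans
    (by rw [Pi.smul_apply, smul_eq_mul, ← div_eq_inv_mul])

theorem hasSum_coeff_circleIntegral_mul_one_add_pow_div_pow_succ {g : ℂ → ℂ} {R : ℝ}
    (hR : 0 < R) (hg : DiffContOnCl ℂ g (ball 0 R)) {s : ℂ} (hs : ‖s‖ * (1 + R) < R) :
    HasSum
      (fun n : ℕ ↦
        ((2 * Real.pi * I)⁻¹ * ∮ z in C(0, R), g z * (1 + z) ^ n / z ^ (n + 1)) * s ^ n)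
      (g (s / (1 - s)) / (1 - s)) := by
  have hs1 : ‖s‖ < 1 := by nlinarith [norm_nonneg s]
  have h1s : 1 - s ≠ 0 := sub_ne_zero.2 fun h ↦ by simp [← h] at hs1
  have hw : s / (1 - s) ∈ ball 0 R := by
    have : 1 - ‖s‖ ≤ ‖1 - s‖ := by simpa using norm_sub_norm_le (1 : ℂ) s
    rw [mem_ball_zero_iff, norm_div, div_lt_iff₀ (norm_pos_iff.2 h1s)]
    nlinarith
  have hgc : ContinuousOn g (sphere 0 R) := by
    refine hg.continuousOn.mono ?_
    rw [closure_ball 0 hR.ne']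
    exact sphere_subset_closedBall
  have hcoeff : ∀ n : ℕ,
      (2 * Real.pi * I)⁻¹ * ∮ z in C(0, R), g z * (1 + z) ^ n / z ^ (n + 1) * s ^ n
        = ((2 * Real.pi * I)⁻¹ * ∮ z in C(0, R), g z * (1 + z) ^ n / z ^ (n + 1)) * s ^ n := by
    intro n
    have h := circleIntegral.integral_smul_const
      (fun z ↦ g z * (1 + z) ^ n / z ^ (n + 1)) (s ^ n) 0 R
    simp only [smul_eq_mul] at h
    rw [h, ← mul_assoc]
  simp_rw [← hcoeff, ← two_pi_I_inv_mul_circleIntegral_mul_inv_sub_mul_one_add hg h1s hw]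
  exact (hasSum_circleIntegral_mul_one_add_pow_div_pow_succ_mul hR hgc hs).mul_left _

theorem one_add_ne_zero_of_norm_lt_one {R : Type*} [NormedRing R] [NormOneClass R] {z : R}
    (h : ‖z‖ < 1) : 1 + z ≠ 0 := fun h0 ↦ by
  rw [eq_neg_of_add_eq_zero_right h0, norm_neg, norm_one] at h
  exact lt_irrefl _ h

theorem prod_one_add_mul_div_one_sub {K ι : Type*} [Field K] (S : Finset ι) (a : ι → K) {t : K}
    (ht : 1 - t ≠ 0) :
    ∏ i ∈ S, (1 + a i * (t / (1 - t))) = (∏ i ∈ S, (1 + (a i - 1) * t)) / (1 - t) ^ S.card := by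
  rw [← Finset.prod_const, ← Finset.prod_div_distrib]
  refine Finset.prod_congr rfl fun i _ ↦ ?_
  field_simp
  ring

theorem pow_mul_prod_div_prod_one_add_mul_div_one_sub {K : Type*} [Field K] {r : ℕ}
    (a : Fin r → K) {t : K} (ht : 1 - t ≠ 0) :
    t ^ r * ((∏ i, a i) * (1 + t / (1 - t)) ^ (r + 1) / (∏ i, (1 + a i * (t / (1 - t)))) / (1 - t))
      = 1 / (1 - t) ^ 2 * ∏ i, a i * t / (1 + (a i - 1) * t) := by
  have h1 : 1 + t / (1 - t) = (1 - t)⁻¹ := by field_simp; ring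
  rw [prod_one_add_mul_div_one_sub _ _ ht, h1, Finset.prod_div_distrib, Finset.prod_mul_distrib,
    Finset.prod_const, Finset.card_univ, Fintype.card_fin]
  generalize ∏ i, (1 + (a i - 1) * t) = Q
  rcases eq_or_ne Q 0 with rfl | hQ
  · simp
  rw [inv_pow]
  field_simp
  ring

theorem euler_number_complete_intersection_generating_series_general
    (r : ℕ) (m : Fin r → ℕ)
    (ε : ℝ) (hε : 0 < ε) (hεm : ∀ i, ε < 1 / (m i)) :
    ∃ δ > (0 : ℝ), ∀ t : ℂ, ‖t‖ < δ →
      HasSum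
        (fun n : ℕ =>
          ((2 * (Real.pi : ℂ) * I)⁻¹ *
              ∮ z in C(0, ε),
                (∏ i, (m i : ℂ)) * (1 + z) ^ (n + r + 1) /
                  (z ^ (n + 1) * ∏ i, (1 + (m i : ℂ) * z))) *
            t ^ (n + r))
        (1 / (1 - t) ^ 2 *
          ∏ i, (m i : ℂ) * t / (1 + ((m i : ℂ) - 1) * t)) := by
  have hmε : ∀ i, (m i : ℝ) * ε < 1 := fun i ↦ by
    rcases (m i).eq_zero_or_pos with h | h
    · simp [h]
    · exact (lt_div_iff₀' (by exact_mod_cast h)).1 (hεm i)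
  set g : ℂ → ℂ := fun z ↦ (∏ i, (m i : ℂ)) * (1 + z) ^ (r + 1) / ∏ i, (1 + (m i : ℂ) * z)
  have hg : DiffContOnCl ℂ g (ball 0 ε) := by
    refine DifferentiableOn.diffContOnCl ?_
    rw [closure_ball 0 hε.ne']
    refine .div (by fun_prop) (by fun_prop) fun z hz ↦
      Finset.prod_ne_zero_iff.2 fun i _ ↦ one_add_ne_zero_of_norm_lt_one ?_
    calc ‖(m i : ℂ) * z‖ = m i * ‖z‖ := by simp
      _ ≤ m i * ε := by gcongr; exact mem_closedBall_zero_iff.1 hz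
      _ < 1 := hmε i
  refine ⟨ε / (1 + ε), by positivity, fun t ht ↦ ?_⟩
  have hts : ‖t‖ * (1 + ε) < ε := (lt_div_iff₀ (by positivity)).1 ht
  have h1t : 1 - t ≠ 0 := sub_ne_zero.2 fun h ↦ by
    simp only [← h, norm_one] at hts; linarith
  have hsummand : ∀ n : ℕ, ((2 * (Real.pi : ℂ) * I)⁻¹ *
      ∮ z in C(0, ε), (∏ i, (m i : ℂ)) * (1 + z) ^ (n + r + 1) /
        (z ^ (n + 1) * ∏ i, (1 + (m i : ℂ) * z))) * t ^ (n + r)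
      = t ^ r *
        (((2 * Real.pi * I)⁻¹ * ∮ z in C(0, ε), g z * (1 + z) ^ n / z ^ (n + 1)) * t ^ n) := by
    intro n
    have hintegrand : ∀ z : ℂ, (∏ i, (m i : ℂ)) * (1 + z) ^ (n + r + 1) /
        (z ^ (n + 1) * ∏ i, (1 + (m i : ℂ) * z)) = g z * (1 + z) ^ n / z ^ (n + 1) := fun z ↦ by
      simp only [g]
      ring
    simp only [hintegrand]
    ring
  simp_rw [hsummand, ← pow_mul_prod_div_prod_one_add_mul_div_one_sub (fun i ↦ (m i : ℂ)) h1t]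
  exact (hasSum_coeff_circleIntegral_mul_one_add_pow_div_pow_succ hε hg hts).mul_left _

/-- The generating series of the Euler numbers of smooth complete intersections
`Y^N_{m₁,…,m_r}` in `ℂP^{N-1}` equals `(1/(1−t)²)·∏_j m_j t/(1+(m_j−1)t)`. -/
theorem euler_number_complete_intersection_generating_series
    (r : ℕ) (hr : 1 ≤ r) (m : Fin r → ℕ) (hm : ∀ i, 1 ≤ m i)
    (ε : ℝ) (hε : 0 < ε) (hεm : ∀ i, ε < 1 / (m i)) :
    ∃ δ > (0 : ℝ), ∀ t : ℂ, ‖t‖ < δ →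
      HasSum
        (fun n : ℕ =>
          ((2 * (Real.pi : ℂ) * I)⁻¹ *
              ∮ z in C(0, ε),
                (∏ i, (m i : ℂ)) * (1 + z) ^ (n + r + 1) /
                  (z ^ (n + 1) * ∏ i, (1 + (m i : ℂ) * z))) *
            t ^ (n + r))
        (1 / (1 - t) ^ 2 *
          ∏ i, (m i : ℂ) * t / (1 + ((m i : ℂ) - 1) * t)) :=
  euler_number_complete_intersection_generating_series_general r m ε hε hεm
end

section
/- For every τ ∈ ℂ with Im τ > 0, the derivative of the theta function at the origin satisfies θ′(0, τ) = 2π · η(τ)³. -/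
open Complex

/-- The Jacobi theta function
`θ(v,τ) = i·e^{πiτ/4}·e^{−πiv}·∏_{k≥1}(1−q^k)(1−q^{k−1}e^{2πiv})(1−q^k e^{−2πiv})`,
where `q = e^{2πiτ}`. -/
noncomputable def theta (v τ : ℂ) : ℂ :=
  I * exp ((Real.pi : ℂ) * I * τ / 4) * exp (-((Real.pi : ℂ) * I * v)) *
    ∏' k : ℕ,
      (1 - exp (2 * (Real.pi : ℂ) * I * τ) ^ (k + 1)) *
      (1 - exp (2 * (Real.pi : ℂ) * I * τ) ^ k * exp (2 * (Real.pi : ℂ) * I * v)) *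
      (1 - exp (2 * (Real.pi : ℂ) * I * τ) ^ (k + 1) * exp (-(2 * (Real.pi : ℂ) * I * v)))

/-- The Dedekind eta function `η(τ) = e^{πiτ/12}·∏_{k≥1}(1−q^k)`, `q = e^{2πiτ}`. -/
noncomputable def dedekindEta (τ : ℂ) : ℂ :=
  exp ((Real.pi : ℂ) * I * τ / 12) *
    ∏' k : ℕ, (1 - exp (2 * (Real.pi : ℂ) * I * τ) ^ (k + 1))

/-!
Pulling the factor `k = 0` out of the second product gives
`θ(v) = (1 - e^{2πiv}) · H(v)` with
`H(v) = i e^{πiτ/4} e^{-πiv} (q; q)_∞ (q e^{2πiv}; q)_∞ (q e^{-2πiv}; q)_∞`,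
and `H` is continuous because `(a; q)_∞` depends continuously on `a` (the product converges
locally uniformly for `‖q‖ < 1`). Since the first factor vanishes at `0`, only its derivative
`-2πi` contributes: `θ'(0) = -2πi · H(0) = 2π e^{πiτ/4} (q; q)_∞³ = 2π η(τ)³`.
-/

noncomputable def qPochhammer (a q : ℂ) : ℂ := ∏' k : ℕ, (1 - a * q ^ k)

section qPochhammer

variable {q : ℂ}

lemma multipliable_one_sub_mul_pow (hq : ‖q‖ < 1) (a : ℂ) :
    Multipliable fun k : ℕ => 1 - a * q ^ k := by
  simpa only [sub_eq_add_neg] using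
    Complex.multipliable_one_add_of_summable ((summable_geometric_of_norm_lt_one hq).mul_left a).neg

lemma qPochhammer_eq_one_sub_mul (hq : ‖q‖ < 1) (a : ℂ) :
    qPochhammer a q = (1 - a) * qPochhammer (a * q) q := by
  rw [qPochhammer, tprod_eq_zero_mul', qPochhammer]
  · simp only [pow_zero, mul_one, pow_succ, mul_assoc, mul_comm q]
  · simpa only [pow_succ, mul_assoc, mul_comm q] using multipliable_one_sub_mul_pow hq (a * q)

lemma continuous_qPochhammer (hq : ‖q‖ < 1) : Continuous fun a => qPochhammer a q := by
  refine continuous_iff_continuousAt.mpr fun a => ?_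
  have hprod : HasProdLocallyUniformlyOn (fun k x => 1 + -(x * q ^ k))
      (fun x => ∏' k, (1 + -(x * q ^ k))) (Metric.ball 0 (‖a‖ + 1)) := by
    refine ((summable_geometric_of_lt_one (norm_nonneg q) hq).mul_left (‖a‖ + 1)
      ).hasProdLocallyUniformlyOn_nat_one_add Metric.isOpen_ball
        (.of_forall fun k x hx => ?_) fun k => by fun_prop
    rw [norm_neg, norm_mul, norm_pow]
    exact mul_le_mul_of_nonneg_right (by simpa using (mem_ball_zero_iff.mp hx).le) (by positivity)
  have hcont := hprod.continuousOn (.of_forall fun s => by fun_prop)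
  simpa only [qPochhammer, sub_eq_add_neg] using
    hcont.continuousAt (Metric.isOpen_ball.mem_nhds (by simp))

end qPochhammer

theorem HasDerivAt.mul_continuousAt_of_eq_zero {𝕜 : Type*} [NontriviallyNormedField 𝕜]
    {f g : 𝕜 → 𝕜} {f' a : 𝕜} (hf : HasDerivAt f f' a) (hfa : f a = 0)
    (hg : ContinuousAt g a) : HasDerivAt (fun x => f x * g x) (f' * g a) a := by
  refine hasDerivAt_iff_tendsto_slope.mpr <|
    ((hasDerivAt_iff_tendsto_slope.mp hf).mul (hg.tendsto.mono_left nhdsWithin_le_nhds)).congr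
      fun x => ?_
  simp only [slope_def_field, hfa, zero_mul, sub_zero]
  ring

noncomputable def nome (τ : ℂ) : ℂ := exp (2 * (Real.pi : ℂ) * I * τ)

lemma norm_nome_lt_one {τ : ℂ} (hτ : 0 < τ.im) : ‖nome τ‖ < 1 :=
  UpperHalfPlane.norm_exp_two_pi_I_lt_one ⟨τ, hτ⟩

lemma theta_eq_qPochhammer {τ : ℂ} (hτ : 0 < τ.im) (v : ℂ) :
    theta v τ = I * exp ((Real.pi : ℂ) * I * τ / 4) * exp (-((Real.pi : ℂ) * I * v)) *
      (qPochhammer (nome τ) (nome τ) * qPochhammer (exp (2 * (Real.pi : ℂ) * I * v)) (nome τ) *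
        qPochhammer (nome τ * exp (-(2 * (Real.pi : ℂ) * I * v))) (nome τ)) := by
  have hq := norm_nome_lt_one hτ
  rw [theta, ← nome, qPochhammer, qPochhammer, qPochhammer,
    ← Multipliable.tprod_mul (multipliable_one_sub_mul_pow hq _)
      (multipliable_one_sub_mul_pow hq _),
    ← Multipliable.tprod_mul ((multipliable_one_sub_mul_pow hq _).mul
      (multipliable_one_sub_mul_pow hq _)) (multipliable_one_sub_mul_pow hq _)]
  congr 2
  funext k
  ring

lemma dedekindEta_eq_qPochhammer (τ : ℂ) :
    dedekindEta τ = exp ((Real.pi : ℂ) * I * τ / 12) * qPochhammer (nome τ) (nome τ) := by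
  simp only [dedekindEta, qPochhammer, nome, pow_succ']

/-- The classical identity `θ'(0, τ) = 2π·η(τ)³`. -/
theorem theta_deriv_zero_eq_eta_cubed
    (τ : ℂ) (hτ : 0 < τ.im) :
    deriv (fun w => theta w τ) 0 = 2 * (Real.pi : ℂ) * (dedekindEta τ) ^ 3 := by
  have hq : ‖nome τ‖ < 1 := norm_nome_lt_one hτ
  have hPochhammer := continuous_qPochhammer hq
  have hvanish : HasDerivAt (fun v : ℂ => 1 - exp (2 * (Real.pi : ℂ) * I * v))
      (-(2 * (Real.pi : ℂ) * I)) 0 := by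
    simpa using (((hasDerivAt_id (0 : ℂ)).const_mul (2 * (Real.pi : ℂ) * I)).cexp).const_sub 1
  have hfactor : (fun w => theta w τ) = fun v => (1 - exp (2 * (Real.pi : ℂ) * I * v)) *
      (I * exp ((Real.pi : ℂ) * I * τ / 4) * exp (-((Real.pi : ℂ) * I * v)) *
        (qPochhammer (nome τ) (nome τ) *
          qPochhammer (exp (2 * (Real.pi : ℂ) * I * v) * nome τ) (nome τ) *
          qPochhammer (nome τ * exp (-(2 * (Real.pi : ℂ) * I * v))) (nome τ))) := by
    funext v
    rw [theta_eq_qPochhammer hτ, qPochhammer_eq_one_sub_mul hq (exp _)]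
    ring
  have hcube : exp ((Real.pi : ℂ) * I * τ / 12) ^ 3 = exp ((Real.pi : ℂ) * I * τ / 4) := by
    rw [← Complex.exp_nat_mul]
    ring_nf
  rw [hfactor, (hvanish.mul_continuousAt_of_eq_zero (by simp) (by fun_prop)).deriv,
    dedekindEta_eq_qPochhammer, mul_pow, hcube]
  simp only [mul_zero, neg_zero, Complex.exp_zero, mul_one, one_mul]
  linear_combination (-(2 * (Real.pi : ℂ)) * exp ((Real.pi : ℂ) * I * τ / 4) *
    qPochhammer (nome τ) (nome τ) ^ 3) * Complex.I_sq
end
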